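/- Let M'₁, M'₂ be matroids on a common finite ground set N' with rank functions rk'₁, rk'₂, let w : N' → ℕ with 1 ≤ w(e) ≤ W, and let M₁, M₂ be the unfolded matroids on N with rank functions rk₁, rk₂. Suppose y', z' assign nonnegative integers to subsets of N', the supports of y' and of z' are each totally ordered by strict inclusion (chains), and for every e ∈ N' we have ∑_{S' ⊆ N' : e ∈ S'} (y'(S') + z'(S')) ≥ w(e). Then there exist functions y, z assigning nonnegative integers to subsets of N such that (a) for every (e,i) ∈ N, ∑_{S ⊆ N : (e,i) ∈ S} (y(S) + z(S)) ≥ 1, and (b) ∑_{S ⊆ N} (y(S)·rk₁(S) + z(S)·rk₂(S)) ≤ ∑_{S' ⊆ N'} (y'(S')·rk'₁(S') + z'(S')·rk'₂(S')). -/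

import Mathlib

open Finset

/-- A matroid on a finite ground set, given by its family of independent sets. -/
structure FinMatroid (α : Type*) [DecidableEq α] [Fintype α] where
  Indep : Finset α → Prop
  indep_empty : Indep ∅
  indep_subset : ∀ ⦃A B : Finset α⦄, A ⊆ B → Indep B → Indep A
  indep_exchange : ∀ ⦃A B : Finset α⦄, Indep A → Indep B → B.card < A.card →
    ∃ x ∈ A \ B, Indep (insert x B)

/-- The rank of a set `S` in a matroid: the size of a largest independent subset of `S`. -/
noncomputable def FinMatroid.rank {α : Type*} [DecidableEq α] [Fintype α]
    (M : FinMatroid α) (S : Finset α) : ℕ :=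
  sSup {n : ℕ | ∃ I ⊆ S, M.Indep I ∧ I.card = n}

/-- The rank of `S` with respect to an arbitrary independence predicate. -/
noncomputable def frank {β : Type*} (Ind : Finset β → Prop) (S : Finset β) : ℕ :=
  sSup {n : ℕ | ∃ I ⊆ S, Ind I ∧ I.card = n}

variable {α : Type*} [DecidableEq α] [Fintype α]

/-- The unfolded ground set `N = {(e,i) : e ∈ N', 1 ≤ i ≤ w e}`. -/
def unfoldGround (w : α → ℕ) : Finset (α × ℕ) :=
  Finset.univ.biUnion fun e => (Finset.Icc 1 (w e)).image fun i => (e, i)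

/-- The `i`-th layer projection `{e ∈ N' : (e,i) ∈ I}`. -/
def proj1 (I : Finset (α × ℕ)) (i : ℕ) : Finset α :=
  Finset.univ.filter fun e => (e, i) ∈ I

/-- The `i`-th reverse-layer projection `{e ∈ N' : (e, w e - i + 1) ∈ I}`. -/
def proj2 (w : α → ℕ) (I : Finset (α × ℕ)) (i : ℕ) : Finset α :=
  Finset.univ.filter fun e => i ≤ w e ∧ (e, w e - i + 1) ∈ I

/-- Independence in the unfolded matroid `M₁`. -/
def UnfoldIndep1 (M' : FinMatroid α) (w : α → ℕ) (W : ℕ) (I : Finset (α × ℕ)) : Prop :=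
  I ⊆ unfoldGround w ∧ ∀ i ∈ Finset.Icc 1 W, M'.Indep (proj1 I i)

/-- Independence in the unfolded matroid `M₂`. -/
def UnfoldIndep2 (M' : FinMatroid α) (w : α → ℕ) (W : ℕ) (I : Finset (α × ℕ)) : Prop :=
  I ⊆ unfoldGround w ∧ ∀ i ∈ Finset.Icc 1 W, M'.Indep (proj2 w I i)

/-- The unfolding `{(e,i) : e ∈ S', 1 ≤ i ≤ w e}` of a set `S' ⊆ N'`. -/
def unfoldSet (w : α → ℕ) (S' : Finset α) : Finset (α × ℕ) :=
  S'.biUnion fun e => (Finset.Icc 1 (w e)).image fun i => (e, i)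

/-!
With `a e = ∑_{S ∋ e} y' S`, the dual `y` puts one unit on the copy, in layer `k`, of the
level set `{e | k ≤ a e}` for every `1 ≤ k ≤ ∑ y'`; `z` is built from `z'` in the same way on
the reversed layers. The element `(e, i)` is covered by `y` if `i ≤ a e`, and otherwise by `z`
in reversed layer `w e - i + 1`, because `w e ≤ a e + b e`. An independent set inside a single
layer projects injectively onto an independent set of the original matroid, so a layer copy
costs no more than the level set itself; and since the support of `y'` is a chain, the level
sets of `a` are the sets of the chain repeated with their multiplicities, so
`∑_k rk'(level set k) ≤ ∑ y' S · rk' S`.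
-/

section Rank

variable {β γ : Type*}

theorem frank_le {Ind : Finset β → Prop} {S : Finset β} {m : ℕ}
    (h : ∀ I ⊆ S, Ind I → #I ≤ m) : frank Ind S ≤ m :=
  csSup_le' <| by rintro n ⟨I, hIS, hI, rfl⟩; exact h I hIS hI

theorem card_le_frank {Ind : Finset β → Prop} {S I : Finset β} (hIS : I ⊆ S) (hI : Ind I) :
    #I ≤ frank Ind S :=
  le_csSup ⟨#S, by rintro n ⟨J, hJS, -, rfl⟩; exact card_le_card hJS⟩ ⟨I, hIS, hI, rfl⟩

theorem FinMatroid.rank_mono [DecidableEq β] [Fintype β] (M : FinMatroid β) : Monotone M.rank :=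
  fun _ _ hST => frank_le fun _ hIS hI => card_le_frank (hIS.trans hST) hI

theorem frank_le_rank_of_injOn [DecidableEq β] [Fintype β] [DecidableEq γ]
    {Ind : Finset γ → Prop} (M : FinMatroid β) {f : γ → β} {S : Finset γ} {T : Finset β}
    (hf : Set.InjOn f S) (hST : Set.MapsTo f S T) (hInd : ∀ I ⊆ S, Ind I → M.Indep (I.image f)) :
    frank Ind S ≤ M.rank T :=
  frank_le fun I hIS hI => by
    rw [← card_image_of_injOn (hf.mono (coe_subset.2 hIS))]
    exact card_le_frank (fun _ h => by
      obtain ⟨x, hx, rfl⟩ := mem_image.1 h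
      exact hST (hIS hx)) (hInd I hIS hI)

end Rank

section Fiber

variable {ι γ : Type*} [DecidableEq γ] {s : Finset ι} {t : Finset γ} {g : ι → γ}

theorem sum_card_fiber_mul (h : ∀ i ∈ s, g i ∈ t) (f : γ → ℕ) :
    ∑ x ∈ t, #{i ∈ s | g i = x} * f x = ∑ i ∈ s, f (g i) := by
  rw [← sum_fiberwise_of_maps_to h]
  refine sum_congr rfl fun x _ => ?_
  rw [sum_congr rfl fun i hi => by rw [(mem_filter.1 hi).2], sum_const, smul_eq_mul]

theorem one_le_sum_card_fiber {i : ι} (hi : i ∈ s) (hit : g i ∈ t) :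
    1 ≤ ∑ x ∈ t, #{j ∈ s | g j = x} := by
  have hpos : 0 < #{j ∈ s | g j = g i} := card_pos.2 ⟨i, mem_filter.2 ⟨hi, rfl⟩⟩
  exact hpos.trans_le
    (single_le_sum (f := fun x => #{j ∈ s | g j = x}) (fun _ _ => Nat.zero_le _) hit)

end Fiber

theorem exists_top_of_chain {β : Type*} [Fintype β] {y : Finset β → ℕ}
    (hchain : ∀ S T : Finset β, y S ≠ 0 → y T ≠ 0 → S ⊆ T ∨ T ⊆ S) (hy : ∃ S, y S ≠ 0) :
    ∃ T, y T ≠ 0 ∧ ∀ S, y S ≠ 0 → S ⊆ T := by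
  obtain ⟨S₀, hS₀⟩ := hy
  obtain ⟨T, hT, hmax⟩ := exists_max_image {S | y S ≠ 0} card ⟨S₀, by simpa using hS₀⟩
  rw [mem_filter] at hT
  refine ⟨T, hT.2, fun S hS => (hchain S T hS hT.2).elim id fun hTS => ?_⟩
  rw [eq_of_subset_of_card_le hTS (hmax S (by simpa using hS))]

theorem mem_unfoldGround {w : α → ℕ} {p : α × ℕ} :
    p ∈ unfoldGround w ↔ 1 ≤ p.2 ∧ p.2 ≤ w p.1 := by
  simp only [unfoldGround, mem_biUnion, mem_univ, true_and, mem_image, mem_Icc, Prod.ext_iff]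
  constructor
  · rintro ⟨e, i, hi, rfl, rfl⟩
    exact hi
  · exact fun hp => ⟨p.1, p.2, hp, rfl, rfl⟩

def coverCount (y : Finset α → ℕ) (e : α) : ℕ :=
  ∑ S with e ∈ S, y S

/-- Indexed from `0`: `superlevel y k` is the level set `{e | k + 1 ≤ coverCount y e}`. -/
def superlevel (y : Finset α → ℕ) (k : ℕ) : Finset α :=
  {e | k < coverCount y e}

theorem coverCount_le_sum (y : Finset α → ℕ) (e : α) : coverCount y e ≤ ∑ S, y S :=
  sum_le_sum_of_subset (filter_subset _ _)

theorem coverCount_add_single (y : Finset α → ℕ) (T : Finset α) (e : α) :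
    coverCount (y + Pi.single T 1) e = coverCount y e + if e ∈ T then 1 else 0 := by
  simp [coverCount, sum_add_distrib, Pi.single_apply]

theorem coverCount_eq_zero_of_notMem {y : Finset α → ℕ} {T : Finset α}
    (hT : ∀ S, y S ≠ 0 → S ⊆ T) {e : α} (he : e ∉ T) : coverCount y e = 0 :=
  sum_eq_zero fun S hS => by_contra fun h => he (hT S h (mem_filter.1 hS).2)

theorem sum_superlevel_le_of_chain (r : Finset α → ℕ) (hr : Monotone r) (y : Finset α → ℕ)
    (hchain : ∀ S T : Finset α, y S ≠ 0 → y T ≠ 0 → S ⊆ T ∨ T ⊆ S) :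
    ∑ k ∈ range (∑ S, y S), r (superlevel y k) ≤ ∑ S, y S * r S := by
  obtain ⟨n, hn⟩ : ∃ n, ∑ S, y S = n := ⟨_, rfl⟩
  induction n generalizing y with
  | zero => simp [hn]
  | succ n ih =>
    -- Removing one copy of the largest set `T` of the chain lowers every level index by one
    -- and drops the bottom level set, which lies in `T`.
    have hpos : ∑ S, y S ≠ 0 := by omega
    obtain ⟨S, -, hS⟩ := exists_ne_zero_of_sum_ne_zero hpos
    obtain ⟨T, hT, htop⟩ := exists_top_of_chain hchain ⟨S, hS⟩
    obtain ⟨x, hx⟩ : ∃ x, y = x + Pi.single T 1 :=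
      ⟨Function.update y T (y T - 1), funext fun S => by
        by_cases hS : S = T
        · subst hS; simp; omega
        · simp [hS]⟩
    have hsum : ∑ S, x S = n := by
      simp only [hx, Pi.add_apply, sum_add_distrib, sum_pi_single', mem_univ, if_true] at hn
      omega
    have hsupp : ∀ S, x S ≠ 0 → y S ≠ 0 := fun S hS => by
      simp only [hx, Pi.add_apply]
      omega
    have hshift : ∀ k, superlevel y (k + 1) = superlevel x k := fun k => by
      ext e
      by_cases he : e ∈ T
      · simp [superlevel, hx, coverCount_add_single, he]
      · have := coverCount_eq_zero_of_notMem htop he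
        simp_all [superlevel, coverCount_add_single]
    have hbottom : superlevel y 0 ⊆ T := fun e he => by
      by_contra he'
      simp [superlevel, coverCount_eq_zero_of_notMem htop he'] at he
    calc ∑ k ∈ range (∑ S, y S), r (superlevel y k)
        = ∑ k ∈ range (∑ S, x S), r (superlevel x k) + r (superlevel y 0) := by
          rw [hn, sum_range_succ', hsum]
          simp only [hshift]
      _ ≤ ∑ S, x S * r S + r T :=
          add_le_add (ih x (fun S S' hS hS' => hchain S S' (hsupp S hS) (hsupp S' hS')) hsum)
            (hr hbottom)
      _ = ∑ S, y S * r S := by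
          simp [hx, add_mul, sum_add_distrib, Pi.single_apply]

def layerCopy1 (w : α → ℕ) (S : Finset α) (i : ℕ) : Finset (α × ℕ) :=
  {p ∈ unfoldGround w | p.1 ∈ S ∧ p.2 = i}

def layerCopy2 (w : α → ℕ) (S : Finset α) (i : ℕ) : Finset (α × ℕ) :=
  {p ∈ unfoldGround w | p.1 ∈ S ∧ i ≤ w p.1 ∧ p.2 = w p.1 - i + 1}

theorem frank_layerCopy1_le (M' : FinMatroid α) {w : α → ℕ} {W : ℕ} (hW : ∀ e, w e ≤ W)
    (S : Finset α) {i : ℕ} (hi : 1 ≤ i) :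
    frank (UnfoldIndep1 M' w W) (layerCopy1 w S i) ≤ M'.rank S := by
  have hmem : ∀ {p}, p ∈ layerCopy1 w S i ↔ (1 ≤ p.2 ∧ p.2 ≤ w p.1) ∧ p.1 ∈ S ∧ p.2 = i := by
    simp [layerCopy1, mem_unfoldGround]
  refine frank_le_rank_of_injOn M' (f := Prod.fst) ?_ (fun p hp => (hmem.1 hp).2.1) ?_
  · intro p hp q hq hpq
    exact Prod.ext hpq ((hmem.1 hp).2.2.trans (hmem.1 hq).2.2.symm)
  · intro I hIS hI
    rcases I.eq_empty_or_nonempty with rfl | ⟨p, hp⟩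
    · simpa using M'.indep_empty
    have hiW : i ≤ W := by
      obtain ⟨⟨-, h⟩, -, rfl⟩ := hmem.1 (hIS hp)
      exact h.trans (hW _)
    refine M'.indep_subset (fun e he => ?_) (hI.2 i (mem_Icc.2 ⟨hi, hiW⟩))
    obtain ⟨q, hq, rfl⟩ := mem_image.1 he
    obtain ⟨-, -, hqi⟩ := hmem.1 (hIS hq)
    simpa [proj1, ← hqi] using hq

theorem frank_layerCopy2_le (M' : FinMatroid α) {w : α → ℕ} {W : ℕ} (hW : ∀ e, w e ≤ W)
    (S : Finset α) {i : ℕ} (hi : 1 ≤ i) :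
    frank (UnfoldIndep2 M' w W) (layerCopy2 w S i) ≤ M'.rank S := by
  have hmem : ∀ {p}, p ∈ layerCopy2 w S i ↔
      (1 ≤ p.2 ∧ p.2 ≤ w p.1) ∧ p.1 ∈ S ∧ i ≤ w p.1 ∧ p.2 = w p.1 - i + 1 := by
    simp [layerCopy2, mem_unfoldGround]
  refine frank_le_rank_of_injOn M' (f := Prod.fst) ?_ (fun p hp => (hmem.1 hp).2.1) ?_
  · intro p hp q hq hpq
    refine Prod.ext hpq ?_
    rw [(hmem.1 hp).2.2.2, (hmem.1 hq).2.2.2, hpq]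
  · intro I hIS hI
    rcases I.eq_empty_or_nonempty with rfl | ⟨p, hp⟩
    · simpa using M'.indep_empty
    have hiW : i ≤ W := ((hmem.1 (hIS hp)).2.2.1).trans (hW _)
    refine M'.indep_subset (fun e he => ?_) (hI.2 i (mem_Icc.2 ⟨hi, hiW⟩))
    obtain ⟨q, hq, rfl⟩ := mem_image.1 he
    obtain ⟨-, -, hiq, hqi⟩ := hmem.1 (hIS hq)
    simpa [proj2, hiq, ← hqi] using hq

def unfoldDual1 (w : α → ℕ) (y : Finset α → ℕ) (S : Finset (α × ℕ)) : ℕ :=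
  #{k ∈ range (∑ T, y T) | layerCopy1 w (superlevel y k) (k + 1) = S}

def unfoldDual2 (w : α → ℕ) (z : Finset α → ℕ) (S : Finset (α × ℕ)) : ℕ :=
  #{k ∈ range (∑ T, z T) | layerCopy2 w (superlevel z k) (k + 1) = S}

theorem sum_unfoldDual1_mul_frank_le (M' : FinMatroid α) {w : α → ℕ} {W : ℕ}
    (hW : ∀ e, w e ≤ W) (y : Finset α → ℕ)
    (hchain : ∀ S T : Finset α, y S ≠ 0 → y T ≠ 0 → S ⊆ T ∨ T ⊆ S) :
    ∑ S ∈ (unfoldGround w).powerset, unfoldDual1 w y S * frank (UnfoldIndep1 M' w W) S ≤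
      ∑ S, y S * M'.rank S :=
  calc _ = ∑ k ∈ range (∑ T, y T),
          frank (UnfoldIndep1 M' w W) (layerCopy1 w (superlevel y k) (k + 1)) :=
        sum_card_fiber_mul (fun _ _ => mem_powerset.2 (filter_subset _ _)) _
    _ ≤ ∑ k ∈ range (∑ T, y T), M'.rank (superlevel y k) :=
        sum_le_sum fun k _ => frank_layerCopy1_le M' hW _ (Nat.le_add_left 1 k)
    _ ≤ _ := sum_superlevel_le_of_chain _ M'.rank_mono y hchain

theorem sum_unfoldDual2_mul_frank_le (M' : FinMatroid α) {w : α → ℕ} {W : ℕ}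
    (hW : ∀ e, w e ≤ W) (z : Finset α → ℕ)
    (hchain : ∀ S T : Finset α, z S ≠ 0 → z T ≠ 0 → S ⊆ T ∨ T ⊆ S) :
    ∑ S ∈ (unfoldGround w).powerset, unfoldDual2 w z S * frank (UnfoldIndep2 M' w W) S ≤
      ∑ S, z S * M'.rank S :=
  calc _ = ∑ k ∈ range (∑ T, z T),
          frank (UnfoldIndep2 M' w W) (layerCopy2 w (superlevel z k) (k + 1)) :=
        sum_card_fiber_mul (fun _ _ => mem_powerset.2 (filter_subset _ _)) _
    _ ≤ ∑ k ∈ range (∑ T, z T), M'.rank (superlevel z k) :=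
        sum_le_sum fun k _ => frank_layerCopy2_le M' hW _ (Nat.le_add_left 1 k)
    _ ≤ _ := sum_superlevel_le_of_chain _ M'.rank_mono z hchain

theorem one_le_sum_unfoldDual1 {w : α → ℕ} {y : Finset α → ℕ} {p : α × ℕ}
    (hp : p ∈ unfoldGround w) (hpy : p.2 ≤ coverCount y p.1) :
    1 ≤ ∑ S ∈ (unfoldGround w).powerset with p ∈ S, unfoldDual1 w y S := by
  have hp' := mem_unfoldGround.1 hp
  refine one_le_sum_card_fiber (i := p.2 - 1) (mem_range.2 ?_)
    (mem_filter.2 ⟨mem_powerset.2 (filter_subset _ _), ?_⟩)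
  · have := coverCount_le_sum y p.1
    omega
  · simp only [layerCopy1, superlevel, mem_filter, mem_univ, hp, true_and]
    omega

theorem one_le_sum_unfoldDual2 {w : α → ℕ} {z : Finset α → ℕ} {p : α × ℕ}
    (hp : p ∈ unfoldGround w) (hpz : w p.1 < p.2 + coverCount z p.1) :
    1 ≤ ∑ S ∈ (unfoldGround w).powerset with p ∈ S, unfoldDual2 w z S := by
  have hp' := mem_unfoldGround.1 hp
  refine one_le_sum_card_fiber (i := w p.1 - p.2) (mem_range.2 ?_)
    (mem_filter.2 ⟨mem_powerset.2 (filter_subset _ _), ?_⟩)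
  · have := coverCount_le_sum z p.1
    omega
  · simp only [layerCopy2, superlevel, mem_filter, mem_univ, hp, true_and]
    omega

/-- from an integral feasible dual solution `(y', z')` for the
weighted matroid intersection LP whose supports are chains, one can construct
an integral feasible dual solution `(y, z)` for the unfolded (unweighted)
matroid intersection LP whose objective value is no larger. -/
theorem dual_unfolding (M'₁ M'₂ : FinMatroid α) (w : α → ℕ) (W : ℕ)
    (hw : ∀ e : α, 1 ≤ w e ∧ w e ≤ W)
    (y' z' : Finset α → ℕ)
    (hy'chain : ∀ S T : Finset α, y' S ≠ 0 → y' T ≠ 0 → S ⊆ T ∨ T ⊆ S)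
    (hz'chain : ∀ S T : Finset α, z' S ≠ 0 → z' T ≠ 0 → S ⊆ T ∨ T ⊆ S)
    (hfeas : ∀ e : α,
      w e ≤ ∑ S' ∈ Finset.univ.powerset.filter (fun S' : Finset α => e ∈ S'),
        (y' S' + z' S')) :
    ∃ y z : Finset (α × ℕ) → ℕ,
      (∀ p ∈ unfoldGround w,
        1 ≤ ∑ S ∈ (unfoldGround w).powerset.filter (fun S : Finset (α × ℕ) => p ∈ S),
          (y S + z S)) ∧
      ∑ S ∈ (unfoldGround w).powerset,
          (y S * frank (UnfoldIndep1 M'₁ w W) S + z S * frank (UnfoldIndep2 M'₂ w W) S) ≤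
        ∑ S' ∈ Finset.univ.powerset,
          (y' S' * M'₁.rank S' + z' S' * M'₂.rank S') := by
  refine ⟨unfoldDual1 w y', unfoldDual2 w z', fun p hp => ?_, ?_⟩
  · have hcover : w p.1 ≤ coverCount y' p.1 + coverCount z' p.1 := by
      simpa only [coverCount, powerset_univ, sum_add_distrib] using hfeas p.1
    rw [sum_add_distrib]
    by_cases hpy : p.2 ≤ coverCount y' p.1
    · exact le_add_right (one_le_sum_unfoldDual1 hp hpy)
    · exact le_add_left (one_le_sum_unfoldDual2 hp (by omega))
  · rw [sum_add_distrib, powerset_univ, sum_add_distrib]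
    exact add_le_add (sum_unfoldDual1_mul_frank_le M'₁ (fun e => (hw e).2) y' hy'chain)
      (sum_unfoldDual2_mul_frank_le M'₂ (fun e => (hw e).2) z' hz'chain)
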